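/- arXiv:1906.05664 — 4 statements merged into one kernel-verified Lean document; each statement's English description precedes it below -/
import Mathlib

section
/- Let P be a probability distribution and Q a full-support probability distribution on a finite set S, f : S → ℝ, and Q_α the exponential tilting of Q by α·f. If α* minimizes F(α) := CE(P‖Q_α) over α ∈ ℝ (and the minimum is attained at an interior point), then E_P[f] = E_{Q_{α*}}[f]. -/
/-!
Writing `Z(α) = ∑ₓ exp (α f x) Q x`, the cross entropy is `CE(P‖Q_α) = log Z(α) - α E_P[f] - ∑ₓ P x log Q x`
as soon as `∑ P = 1`, a differentiable function of `α` with derivative `Z'(α)/Z(α) - E_P[f] = E_{Q_α}[f] - E_P[f]`.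
A global minimiser is a critical point, so the two expectations agree there.
-/

open Real Finset

noncomputable section

namespace ExponentialTilt

variable {S : Type*} [Fintype S]

def crossEntropy (P R : S → ℝ) : ℝ := -∑ x, P x * log (R x)

def partition (Q f : S → ℝ) (α : ℝ) : ℝ := ∑ y, exp (α * f y) * Q y

def tilt (Q f : S → ℝ) (α : ℝ) (x : S) : ℝ := exp (α * f x) * Q x / partition Q f α

variable {P Q : S → ℝ} (f : S → ℝ)

theorem partition_pos [Nonempty S] (hQ : ∀ x, 0 < Q x) (α : ℝ) : 0 < partition Q f α :=
  sum_pos (fun y _ => mul_pos (exp_pos _) (hQ y)) univ_nonempty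

theorem hasDerivAt_partition (Q : S → ℝ) (α : ℝ) :
    HasDerivAt (partition Q f) (∑ y, f y * exp (α * f y) * Q y) α := by
  unfold partition
  refine HasDerivAt.fun_sum fun y _ => ?_
  have h := ((hasDerivAt_mul_const (x := α) (f y)).exp).mul_const (Q y)
  rwa [mul_comm (exp _) (f y)] at h

theorem hasDerivAt_log_partition [Nonempty S] (hQ : ∀ x, 0 < Q x) (α : ℝ) :
    HasDerivAt (fun a => log (partition Q f a)) (∑ x, f x * tilt Q f α x) α := by
  convert (hasDerivAt_partition f Q α).log (partition_pos f hQ α).ne' using 1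
  rw [sum_div]
  exact sum_congr rfl fun x _ => by rw [tilt]; ring

theorem crossEntropy_tilt [Nonempty S] (hQ : ∀ x, 0 < Q x) (hP : ∑ x, P x = 1) (α : ℝ) :
    crossEntropy P (tilt Q f α) =
      log (partition Q f α) - α * ∑ x, P x * f x - ∑ x, P x * log (Q x) := by
  have hlog : ∀ x, log (tilt Q f α x) = α * f x + log (Q x) - log (partition Q f α) := by
    intro x
    rw [tilt, log_div (mul_pos (exp_pos _) (hQ x)).ne' (partition_pos f hQ α).ne',
      log_mul (exp_ne_zero _) (hQ x).ne', log_exp]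
  simp only [crossEntropy, hlog, mul_sub, mul_add, sum_sub_distrib, sum_add_distrib,
    ← sum_mul, hP, mul_left_comm _ α, ← mul_sum]
  ring

theorem hasDerivAt_crossEntropy_tilt [Nonempty S] (hQ : ∀ x, 0 < Q x) (hP : ∑ x, P x = 1)
    (α : ℝ) :
    HasDerivAt (fun a => crossEntropy P (tilt Q f a))
      (∑ x, f x * tilt Q f α x - ∑ x, P x * f x) α := by
  simp only [crossEntropy_tilt f hQ hP]
  exact ((hasDerivAt_log_partition f hQ α).sub (hasDerivAt_mul_const _)).sub_const _

theorem expectation_eq_of_isMinOn [Nonempty S] (hQ : ∀ x, 0 < Q x) (hP : ∑ x, P x = 1)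
    {αstar : ℝ} (hmin : IsMinOn (fun a => crossEntropy P (tilt Q f a)) Set.univ αstar) :
    ∑ x, P x * f x = ∑ x, f x * tilt Q f αstar x :=
  (sub_eq_zero.mp ((hmin.isLocalMin Filter.univ_mem).hasDerivAt_eq_zero
    (hasDerivAt_crossEntropy_tilt f hQ hP αstar))).symm

end ExponentialTilt

end

open ExponentialTilt in
theorem stmt9_general {S : Type*} [Fintype S] (P Q f : S → ℝ) (αstar : ℝ)
    (hP1 : ∑ x, P x = 1)
    (hQ0 : ∀ x, 0 < Q x)
    (hmin : ∀ α : ℝ,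
      (-∑ x, P x *
          Real.log (Real.exp (αstar * f x) * Q x / (∑ y, Real.exp (αstar * f y) * Q y))) ≤
        -∑ x, P x *
          Real.log (Real.exp (α * f x) * Q x / (∑ y, Real.exp (α * f y) * Q y))) :
    (∑ x, P x * f x) =
      ∑ x, f x * (Real.exp (αstar * f x) * Q x / (∑ y, Real.exp (αstar * f y) * Q y)) := by
  have : Nonempty S := (univ_nonempty_iff).mp (nonempty_of_sum_ne_zero (hP1 ▸ one_ne_zero))
  exact expectation_eq_of_isMinOn f hQ0 hP1 fun α _ => hmin α

/-- Calibration property: at an interior minimizer `α*` of the cross entropy of the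
tilted family, `E_P[f] = E_{Q_{α*}}[f]`. -/
theorem stmt9 {S : Type*} [Fintype S] (P Q f : S → ℝ) (αstar : ℝ)
    (hP0 : ∀ x, 0 ≤ P x) (hP1 : ∑ x, P x = 1)
    (hQ0 : ∀ x, 0 < Q x) (hQ1 : ∑ x, Q x = 1)
    (hmin : ∀ α : ℝ,
      (-∑ x, P x *
          Real.log (Real.exp (αstar * f x) * Q x / (∑ y, Real.exp (αstar * f y) * Q y))) ≤
        -∑ x, P x *
          Real.log (Real.exp (α * f x) * Q x / (∑ y, Real.exp (α * f y) * Q y))) :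
    (∑ x, P x * f x) =
      ∑ x, f x * (Real.exp (αstar * f x) * Q x / (∑ y, Real.exp (αstar * f y) * Q y)) :=
  stmt9_general P Q f αstar hP1 hQ0 hmin
end

section
/- Let P, Q be probability distributions on a finite set with Q full-support, let f : S → ℝ, and suppose Var_{Q_α}[f] ≤ σ² for all α ∈ ℝ, where Q_α is the exponential tilting of Q by α·f. Then min_α CE(P‖Q_α) ≤ CE(P‖Q) − (E_P[f] − E_Q[f])²/(2σ²). -/
/-!
`log Z(α)`, with `Z(α) = ∑ exp (α f) Q`, has derivative `E_{Q_α} f` and second derivative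
`Var_{Q_α} f ≤ σ²`, so Taylor's theorem bounds it by `α E_Q f + σ² α² / 2`.
Since `CE(P‖Q_α) = CE(P‖Q) - α E_P f + log Z(α)`, the cross entropy drops by at least
`α Δ - σ² α² / 2` with `Δ = E_P f - E_Q f`, and the vertex `α = Δ / σ²` gives `Δ² / (2σ²)`.
-/

open Real Finset Set

theorem le_of_hasDerivAt_of_monotone {φ φ' : ℝ → ℝ} {a : ℝ}
    (hφ : ∀ t, HasDerivAt φ (φ' t) t) (hmono : Monotone φ') (hcrit : φ' a = 0) (b : ℝ) :
    φ a ≤ φ b := by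
  have hcont : Continuous φ := continuous_iff_continuousAt.2 fun t => (hφ t).continuousAt
  rcases le_total a b with hab | hba
  · refine monotoneOn_of_hasDerivWithinAt_nonneg (convex_Ici a) hcont.continuousOn
      (fun t _ => (hφ t).hasDerivWithinAt) (fun t ht => ?_) self_mem_Ici hab hab
    rw [interior_Ici] at ht
    exact hcrit ▸ hmono (le_of_lt ht)
  · refine antitoneOn_of_hasDerivWithinAt_nonpos (convex_Iic a) hcont.continuousOn
      (fun t _ => (hφ t).hasDerivWithinAt) (fun t ht => ?_) hba self_mem_Iic hba
    rw [interior_Iic] at ht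
    exact hcrit ▸ hmono (le_of_lt ht)

theorem le_add_deriv_mul_add_sq_of_deriv2_le {g g' g'' : ℝ → ℝ} {M : ℝ}
    (hg : ∀ t, HasDerivAt g (g' t) t) (hg' : ∀ t, HasDerivAt g' (g'' t) t)
    (hM : ∀ t, g'' t ≤ M) (a b : ℝ) :
    g b ≤ g a + g' a * (b - a) + M * (b - a) ^ 2 / 2 := by
  have hlin : ∀ t, HasDerivAt (fun t => t - a) 1 t := fun t => (hasDerivAt_id t).sub_const a
  have hφ : ∀ t, HasDerivAt (fun t => g a + g' a * (t - a) + M * (t - a) ^ 2 / 2 - g t)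
      (g' a + M * (t - a) - g' t) t := fun t => by
    refine ((((hlin t).const_mul (g' a)).const_add (g a)).fun_add
      ((((hlin t).fun_pow 2).const_mul M).div_const 2)).fun_sub (hg t) |>.congr_deriv ?_
    ring
  have hφ' : Monotone fun t => g' a + M * (t - a) - g' t :=
    monotone_of_hasDerivAt_nonneg
      (fun t => (((hlin t).const_mul M).const_add (g' a)).fun_sub (hg' t) |>.congr_deriv (by ring))
      fun t => sub_nonneg.2 (hM t)
  have := le_of_hasDerivAt_of_monotone (a := a) hφ hφ' (by ring) b
  norm_num at this
  linarith

section

variable {S : Type*} [Fintype S]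

noncomputable def partitionFn (Q f : S → ℝ) (α : ℝ) : ℝ := ∑ x, exp (α * f x) * Q x

noncomputable def tilt (Q f : S → ℝ) (α : ℝ) (x : S) : ℝ :=
  exp (α * f x) * Q x / partitionFn Q f α

noncomputable def crossEntropy (P R : S → ℝ) : ℝ := -∑ x, P x * log (R x)

variable {Q : S → ℝ} (f : S → ℝ)

theorem partitionFn_pos [Nonempty S] (hQ : ∀ x, 0 < Q x) (α : ℝ) : 0 < partitionFn Q f α :=
  sum_pos (fun x _ => mul_pos (exp_pos _) (hQ x)) Finset.univ_nonempty

theorem partitionFn_zero (hQ1 : ∑ x, Q x = 1) : partitionFn Q f 0 = 1 := by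
  simp [partitionFn, hQ1]

theorem hasDerivAt_sum_mul_exp_mul (g : S → ℝ) (α : ℝ) :
    HasDerivAt (fun α => ∑ x, g x * (exp (α * f x) * Q x))
      (∑ x, g x * f x * (exp (α * f x) * Q x)) α :=
  HasDerivAt.fun_sum fun x _ =>
    (((hasDerivAt_mul_const (f x)).exp.mul_const (Q x)).const_mul (g x)).congr_deriv
      (by ring)

theorem hasDerivAt_partitionFn (α : ℝ) :
    HasDerivAt (partitionFn Q f) (∑ x, f x * (exp (α * f x) * Q x)) α := by
  have h := hasDerivAt_sum_mul_exp_mul f (Q := Q) 1 α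
  simp only [Pi.one_apply, one_mul] at h
  exact h

theorem sum_mul_tilt (g : S → ℝ) (α : ℝ) :
    ∑ x, g x * tilt Q f α x = (∑ x, g x * (exp (α * f x) * Q x)) / partitionFn Q f α := by
  simp only [tilt, sum_div, mul_div_assoc]

variable [Nonempty S] (hQ : ∀ x, 0 < Q x)
include hQ

theorem hasDerivAt_log_partitionFn (α : ℝ) :
    HasDerivAt (fun α => log (partitionFn Q f α)) (∑ x, f x * tilt Q f α x) α := by
  rw [sum_mul_tilt]
  exact (hasDerivAt_partitionFn f α).log (partitionFn_pos f hQ α).ne'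

theorem hasDerivAt_sum_mul_tilt (α : ℝ) :
    HasDerivAt (fun α => ∑ x, f x * tilt Q f α x)
      (∑ x, f x ^ 2 * tilt Q f α x - (∑ x, f x * tilt Q f α x) ^ 2) α := by
  simp only [sum_mul_tilt]
  have hZ := (partitionFn_pos f hQ α).ne'
  refine ((hasDerivAt_sum_mul_exp_mul f f α).div (hasDerivAt_partitionFn f α) hZ).congr_deriv ?_
  simp only [← sq]
  rw [sub_div, div_pow, sq (partitionFn Q f α), mul_div_mul_right _ _ hZ]

theorem log_partitionFn_le (hQ1 : ∑ x, Q x = 1) {σ2 : ℝ}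
    (hvar : ∀ α, ∑ x, f x ^ 2 * tilt Q f α x - (∑ x, f x * tilt Q f α x) ^ 2 ≤ σ2) (α : ℝ) :
    log (partitionFn Q f α) ≤ α * ∑ x, Q x * f x + σ2 * α ^ 2 / 2 := by
  have h := le_add_deriv_mul_add_sq_of_deriv2_le (hasDerivAt_log_partitionFn f hQ)
    (hasDerivAt_sum_mul_tilt f hQ) hvar 0 α
  simp only [tilt, partitionFn_zero f hQ1, log_one, zero_mul, exp_zero, one_mul, div_one,
    sub_zero, zero_add] at h
  simpa only [mul_comm (Q _), mul_comm α] using h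

theorem crossEntropy_tilt {P : S → ℝ} (hP1 : ∑ x, P x = 1) (α : ℝ) :
    crossEntropy P (tilt Q f α) =
      crossEntropy P Q - α * ∑ x, P x * f x + log (partitionFn Q f α) := by
  have hlog : ∀ x, log (tilt Q f α x) = α * f x + log (Q x) - log (partitionFn Q f α) := fun x => by
    rw [tilt, log_div (mul_pos (exp_pos _) (hQ x)).ne' (partitionFn_pos f hQ α).ne',
      log_mul (exp_ne_zero _) (hQ x).ne', log_exp]
  simp only [crossEntropy, hlog, mul_sub, mul_add, sum_sub_distrib, sum_add_distrib, ← sum_mul,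
    hP1, mul_left_comm _ α, ← mul_sum]
  ring

end

theorem stmt10_general {S : Type*} [Fintype S] (P Q f : S → ℝ) (σ2 : ℝ)
    (hP1 : ∑ x, P x = 1)
    (hQ0 : ∀ x, 0 < Q x) (hQ1 : ∑ x, Q x = 1)
    (hvar : ∀ α : ℝ,
      (∑ x, f x ^ 2 * (Real.exp (α * f x) * Q x / (∑ y, Real.exp (α * f y) * Q y))) -
          (∑ x, f x * (Real.exp (α * f x) * Q x / (∑ y, Real.exp (α * f y) * Q y))) ^ 2 ≤
        σ2) :
    ∃ α : ℝ,
      (-∑ x, P x *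
          Real.log (Real.exp (α * f x) * Q x / (∑ y, Real.exp (α * f y) * Q y))) ≤
        (-∑ x, P x * Real.log (Q x)) -
          ((∑ x, P x * f x) - ∑ x, Q x * f x) ^ 2 / (2 * σ2) := by
  have : Nonempty S := by
    by_contra h
    simp [not_nonempty_iff.mp h] at hQ1
  let Δ := (∑ x, P x * f x) - ∑ x, Q x * f x
  refine ⟨Δ / σ2, ?_⟩
  change crossEntropy P (tilt Q f (Δ / σ2)) ≤ crossEntropy P Q - Δ ^ 2 / (2 * σ2)
  have hCE := crossEntropy_tilt f hQ0 hP1 (Δ / σ2)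
  have hZ := log_partitionFn_le f hQ0 hQ1 hvar (Δ / σ2)
  have hvertex : Δ / σ2 * Δ - σ2 * (Δ / σ2) ^ 2 / 2 = Δ ^ 2 / (2 * σ2) := by
    rcases eq_or_ne σ2 0 with rfl | hσ
    · simp
    · field_simp
      ring
  linarith

/-- Calibration improvement: if `Var_{Q_α}[f] ≤ σ²` for all `α`, then
`min_α CE(P‖Q_α) ≤ CE(P‖Q) - (E_P f - E_Q f)² / (2σ²)`. -/
theorem stmt10 {S : Type*} [Fintype S] (P Q f : S → ℝ) (σ2 : ℝ)
    (hP0 : ∀ x, 0 ≤ P x) (hP1 : ∑ x, P x = 1)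
    (hQ0 : ∀ x, 0 < Q x) (hQ1 : ∑ x, Q x = 1)
    (hσ : 0 < σ2)
    (hvar : ∀ α : ℝ,
      (∑ x, f x ^ 2 * (Real.exp (α * f x) * Q x / (∑ y, Real.exp (α * f y) * Q y))) -
          (∑ x, f x * (Real.exp (α * f x) * Q x / (∑ y, Real.exp (α * f y) * Q y))) ^ 2 ≤
        σ2) :
    ∃ α : ℝ,
      (-∑ x, P x *
          Real.log (Real.exp (α * f x) * Q x / (∑ y, Real.exp (α * f y) * Q y))) ≤
        (-∑ x, P x * Real.log (Q x)) -
          ((∑ x, P x * f x) - ∑ x, Q x * f x) ^ 2 / (2 * σ2) :=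
  stmt10_general P Q f σ2 hP1 hQ0 hQ1 hvar
end

section
/- Let P, Q be probability distributions on a finite set with Q full-support. For α > −1 define Q_α(x) := Q(x)^{1+α}/Z(α), Z(α) = Σ_x Q(x)^{1+α}. If α* minimizes CE(P‖Q_α) (attained at an interior point), then CE(P‖Q_{α*}) = H(Q_{α*}), i.e., the cross entropy of the calibrated model with respect to P equals the Shannon entropy of the calibrated model. -/
/-!
Write `Z(α) = ∑ Q^(1+α)`. Since `log Q_α = (1+α) log Q - log Z(α)`, the cross entropy of any
distribution `w` against `Q_α` is `-(1+α) E_w[log Q] + log Z(α)`. For `w = P` this is a smooth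
function of `α` with derivative `E_{Q_α}[log Q] - E_P[log Q]`, which vanishes at the minimiser
`α*`. Taking `w = Q_{α*}` gives the entropy, and the two expressions then agree.
-/

open Real Finset

namespace EntropyCalibration

variable {S : Type*} [Fintype S]

noncomputable def crossEntropy (P R : S → ℝ) : ℝ := -∑ x, P x * log (R x)

/-- The calibrated model `Q_α` of the paper. -/
noncomputable def escort (Q : S → ℝ) (α : ℝ) (x : S) : ℝ := Q x ^ (1 + α) / ∑ y, Q y ^ (1 + α)

variable {Q : S → ℝ}

lemma sum_rpow_pos [Nonempty S] (hQ : ∀ x, 0 < Q x) (α : ℝ) : 0 < ∑ y, Q y ^ (1 + α) :=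
  sum_pos (fun y _ => rpow_pos_of_pos (hQ y) _) univ_nonempty

lemma sum_escort [Nonempty S] (hQ : ∀ x, 0 < Q x) (α : ℝ) : ∑ x, escort Q α x = 1 := by
  simp only [escort, ← sum_div, div_self (sum_rpow_pos hQ α).ne']

lemma log_escort [Nonempty S] (hQ : ∀ x, 0 < Q x) (α : ℝ) (x : S) :
    log (escort Q α x) = (1 + α) * log (Q x) - log (∑ y, Q y ^ (1 + α)) := by
  rw [escort, log_div (rpow_pos_of_pos (hQ x) _).ne' (sum_rpow_pos hQ α).ne', log_rpow (hQ x)]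

lemma crossEntropy_escort [Nonempty S] (hQ : ∀ x, 0 < Q x) {w : S → ℝ} (hw : ∑ x, w x = 1)
    (α : ℝ) :
    crossEntropy w (escort Q α) =
      -((1 + α) * ∑ x, w x * log (Q x)) + log (∑ y, Q y ^ (1 + α)) := by
  simp only [crossEntropy, log_escort hQ, mul_sub, sum_sub_distrib, ← sum_mul, hw, one_mul,
    mul_left_comm (w _) (1 + α), ← mul_sum]
  ring

lemma hasDerivAt_log_sum_rpow [Nonempty S] (hQ : ∀ x, 0 < Q x) (α : ℝ) :
    HasDerivAt (fun t => log (∑ y, Q y ^ (1 + t))) (∑ x, escort Q α x * log (Q x)) α := by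
  have hZ : HasDerivAt (fun t => ∑ y, Q y ^ (1 + t)) (∑ y, Q y ^ (1 + α) * log (Q y)) α := by
    refine HasDerivAt.fun_sum fun y _ => ?_
    exact (((hasDerivAt_id' α).const_add 1).const_rpow (hQ y)).congr_deriv (by ring)
  convert hZ.log (sum_rpow_pos hQ α).ne' using 1
  simp only [escort, div_mul_eq_mul_div, ← sum_div]

lemma hasDerivAt_crossEntropy_escort [Nonempty S] (hQ : ∀ x, 0 < Q x) {P : S → ℝ}
    (hP : ∑ x, P x = 1) (α : ℝ) :
    HasDerivAt (fun t => crossEntropy P (escort Q t))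
      (∑ x, escort Q α x * log (Q x) - ∑ x, P x * log (Q x)) α := by
  simp only [crossEntropy_escort hQ hP]
  exact ((((hasDerivAt_id' α).const_add 1).mul_const _).fun_neg.fun_add
    (hasDerivAt_log_sum_rpow hQ α)).congr_deriv (by ring)

lemma sum_mul_log_eq_of_isLocalMin [Nonempty S] (hQ : ∀ x, 0 < Q x) {P : S → ℝ}
    (hP : ∑ x, P x = 1) {α : ℝ} (hmin : IsLocalMin (fun t => crossEntropy P (escort Q t)) α) :
    ∑ x, P x * log (Q x) = ∑ x, escort Q α x * log (Q x) :=
  (sub_eq_zero.mp (hmin.hasDerivAt_eq_zero (hasDerivAt_crossEntropy_escort hQ hP α))).symm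

theorem crossEntropy_escort_eq_entropy_of_isLocalMin [Nonempty S] (hQ : ∀ x, 0 < Q x)
    {P : S → ℝ} (hP : ∑ x, P x = 1) {α : ℝ}
    (hmin : IsLocalMin (fun t => crossEntropy P (escort Q t)) α) :
    crossEntropy P (escort Q α) = crossEntropy (escort Q α) (escort Q α) := by
  rw [crossEntropy_escort hQ hP, crossEntropy_escort hQ (sum_escort hQ α),
    sum_mul_log_eq_of_isLocalMin hQ hP hmin]

end EntropyCalibration

open EntropyCalibration in
theorem stmt11_general {S : Type*} [Fintype S] (P Q : S → ℝ) (αstar : ℝ)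
    (hP1 : ∑ x, P x = 1)
    (hQ0 : ∀ x, 0 < Q x)
    (hmin : ∀ α : ℝ,
      (-∑ x, P x * Real.log (Q x ^ (1 + αstar) / (∑ y, Q y ^ (1 + αstar)))) ≤
        -∑ x, P x * Real.log (Q x ^ (1 + α) / (∑ y, Q y ^ (1 + α)))) :
    (-∑ x, P x * Real.log (Q x ^ (1 + αstar) / (∑ y, Q y ^ (1 + αstar)))) =
      -∑ x, (Q x ^ (1 + αstar) / (∑ y, Q y ^ (1 + αstar))) *
        Real.log (Q x ^ (1 + αstar) / (∑ y, Q y ^ (1 + αstar))) := by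
  obtain hS | hS := isEmpty_or_nonempty S
  · simp at hP1
  exact crossEntropy_escort_eq_entropy_of_isLocalMin hQ0 hP1
    (Filter.Eventually.of_forall hmin)

/-- Entropy rate calibration: powering the model `Q` by `1+α` and fitting `α`
makes the cross entropy against `P` equal the entropy of the calibrated model. -/
theorem stmt11 {S : Type*} [Fintype S] (P Q : S → ℝ) (αstar : ℝ)
    (hP0 : ∀ x, 0 ≤ P x) (hP1 : ∑ x, P x = 1)
    (hQ0 : ∀ x, 0 < Q x) (hQ1 : ∑ x, Q x = 1)
    (hmin : ∀ α : ℝ,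
      (-∑ x, P x * Real.log (Q x ^ (1 + αstar) / (∑ y, Q y ^ (1 + αstar)))) ≤
        -∑ x, P x * Real.log (Q x ^ (1 + α) / (∑ y, Q y ^ (1 + α)))) :
    (-∑ x, P x * Real.log (Q x ^ (1 + αstar) / (∑ y, Q y ^ (1 + αstar)))) =
      -∑ x, (Q x ^ (1 + αstar) / (∑ y, Q y ^ (1 + αstar))) *
        Real.log (Q x ^ (1 + αstar) / (∑ y, Q y ^ (1 + αstar))) :=
  stmt11_general P Q αstar hP1 hQ0 hmin
end

section
/- Let (X, Y) have joint distribution P on finite sets, Q̂(·|X,Y) a conditional model, and Q̃(·|Y) a conditional model depending only on Y. Define Ẑ by D(x,y,z) = P(x,y)·Q̂(z|x,y). Suppose Q̂ is calibrated to Q̃, meaning α = 0 minimizes α ↦ CE(P‖Q̂_α) for Q̂_α(z|x,y) ∝ Q̂(z|x,y)·Q̃(z|y)^α. Then I(Ẑ; X | Y) ≤ CE(P‖Q̃) − H(Ẑ | X, Y), where CE(P‖Q̃) := E_{(y)∼P}E_{z∼P(·|y)}[log(1/Q̃(z|y))], H(Ẑ|X,Y) := E_{(x,y)∼P}[H(Q̂(·|x,y))],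 and I(Ẑ; X|Y) is conditional mutual information under D. -/
/-!
Under `D` the conditional mutual information splits as `I(Ẑ; X | Y) = H(Ẑ | Y) - H(Ẑ | X, Y)`.
Gibbs' inequality bounds `H(Ẑ | Y)` by the cross entropy `E_D[log 1/Q̃(Z|Y)]`. Calibration turns
this into `CE(P‖Q̃)`: the derivative of `α ↦ CE(P‖Q̂_α)` at `0` is
`E_D[log Q̃(Z|Y)] - E_P[log Q̃(Z|Y)]`, and it vanishes at the minimiser `α = 0`.
-/

open Real Finset

section Gibbs

variable {ι : Type*} [Fintype ι]

lemma mul_log_sub_log_le_sub {d u : ℝ} (hd : 0 ≤ d) (hu : 0 < u) :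
    d * (log u - log d) ≤ u - d := by
  rcases hd.eq_or_lt with rfl | hd
  · simpa using hu.le
  calc d * (log u - log d) = d * log (u / d) := by rw [log_div hu.ne' hd.ne']
    _ ≤ d * (u / d - 1) := mul_le_mul_of_nonneg_left (log_le_sub_one_of_pos (div_pos hu hd)) hd.le
    _ = u - d := by field_simp

theorem sum_mul_log_sum_sub_log_le {d t : ι → ℝ} (hd : ∀ i, 0 ≤ d i) (ht : ∀ i, 0 < t i)
    (ht1 : ∑ i, t i = 1) :
    ∑ i, d i * (log (∑ j, d j) - log (d i)) ≤ -∑ i, d i * log (t i) := by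
  rcases (sum_nonneg fun i _ => hd i).eq_or_lt with hs | hs
  · have hd0 : ∀ i, d i = 0 := fun i =>
      (sum_eq_zero_iff_of_nonneg fun i _ => hd i).1 hs.symm i (mem_univ i)
    simp [hd0]
  suffices h : ∑ i, (d i * (log (∑ j, d j) - log (d i)) + d i * log (t i)) ≤ 0 by
    rw [sum_add_distrib] at h
    linarith
  calc ∑ i, (d i * (log (∑ j, d j) - log (d i)) + d i * log (t i))
      = ∑ i, d i * (log ((∑ j, d j) * t i) - log (d i)) := by
        refine sum_congr rfl fun i _ => ?_
        rw [log_mul hs.ne' (ht i).ne']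
        ring
    _ ≤ ∑ i, ((∑ j, d j) * t i - d i) :=
        sum_le_sum fun i _ => mul_log_sub_log_le_sub (hd i) (mul_pos hs (ht i))
    _ = 0 := by rw [sum_sub_distrib, ← mul_sum, ht1, mul_one, sub_self]

end Gibbs

section Tilt

variable {ι : Type*} [Fintype ι]

lemma sum_mul_log_one_div_tilt {p q t : ι → ℝ} (hp : ∑ i, p i = 1) (hq : ∀ i, 0 < q i)
    (ht : ∀ i, 0 < t i) (α : ℝ) :
    ∑ i, p i * log (1 / (q i * t i ^ α / ∑ j, q j * t j ^ α)) =
      ∑ i, p i * (-log (q i) - α * log (t i)) + log (∑ j, q j * t j ^ α) := by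
  have hne : (univ : Finset ι).Nonempty := nonempty_of_sum_ne_zero (hp ▸ one_ne_zero)
  have hS : 0 < ∑ j, q j * t j ^ α :=
    sum_pos (fun j _ => mul_pos (hq j) (rpow_pos_of_pos (ht j) α)) hne
  have hterm : ∀ i, log (1 / (q i * t i ^ α / ∑ j, q j * t j ^ α)) =
      (-log (q i) - α * log (t i)) + log (∑ j, q j * t j ^ α) := fun i => by
    rw [one_div, log_inv, log_div (mul_pos (hq i) (rpow_pos_of_pos (ht i) α)).ne' hS.ne',
      log_mul (hq i).ne' (rpow_pos_of_pos (ht i) α).ne', log_rpow (ht i)]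
    ring
  simp only [hterm, mul_add, sum_add_distrib, ← sum_mul, hp, one_mul]

lemma hasDerivAt_log_sum_mul_rpow {q t : ι → ℝ} (hq : ∑ i, q i = 1) (ht : ∀ i, 0 < t i) :
    HasDerivAt (fun α : ℝ => log (∑ i, q i * t i ^ α)) (∑ i, q i * log (t i)) 0 := by
  have hS : HasDerivAt (fun α : ℝ => ∑ i, q i * t i ^ α)
      (∑ i, q i * (t i ^ (0 : ℝ) * log (t i))) 0 :=
    HasDerivAt.fun_sum fun i _ => (hasStrictDerivAt_const_rpow (ht i) 0).hasDerivAt.const_mul _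
  have hS0 : ∑ i, q i * t i ^ (0 : ℝ) = 1 := by simp [hq]
  simpa [hS0, hq] using hS.log (by rw [hS0]; exact one_ne_zero)

lemma hasDerivAt_sum_mul_log_one_div_tilt {p q t : ι → ℝ} (hp : ∑ i, p i = 1)
    (hq : ∀ i, 0 < q i) (hq1 : ∑ i, q i = 1) (ht : ∀ i, 0 < t i) :
    HasDerivAt (fun α : ℝ => ∑ i, p i * log (1 / (q i * t i ^ α / ∑ j, q j * t j ^ α)))
      (∑ i, q i * log (t i) - ∑ i, p i * log (t i)) 0 := by
  have hlin : HasDerivAt (fun α : ℝ => ∑ i, p i * (-log (q i) - α * log (t i)))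
      (-∑ i, p i * log (t i)) 0 := by
    simpa using HasDerivAt.fun_sum (u := univ) fun i _ =>
      (((hasDerivAt_id (0 : ℝ)).mul_const (log (t i))).const_sub (-log (q i))).const_mul (p i)
  rw [funext (sum_mul_log_one_div_tilt hp hq ht)]
  exact (hlin.add (hasDerivAt_log_sum_mul_rpow hq1 ht)).congr_deriv (by ring)

end Tilt

section Calibration

variable {X Y Z : Type*} [Fintype X] [Fintype Y] [Fintype Z]

/-- `CE(P‖Q̂_α)` for the tilted model `Q̂_α(z|x,y) ∝ Q̂(z|x,y) Q̃(z|y)^α`. -/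
noncomputable def tiltedCrossEntropy (Pxy : X → Y → ℝ) (Pc Qh : X → Y → Z → ℝ)
    (Qt : Y → Z → ℝ) (α : ℝ) : ℝ :=
  ∑ x, ∑ y, Pxy x y * ∑ z, Pc x y z *
    log (1 / (Qh x y z * Qt y z ^ α / ∑ z', Qh x y z' * Qt y z' ^ α))

theorem sum_mul_sum_mul_log_eq_of_isMinOn_tiltedCrossEntropy {Pxy : X → Y → ℝ}
    {Pc Qh : X → Y → Z → ℝ} {Qt : Y → Z → ℝ}
    (hPc1 : ∀ x y, ∑ z, Pc x y z = 1) (hQh0 : ∀ x y z, 0 < Qh x y z)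
    (hQh1 : ∀ x y, ∑ z, Qh x y z = 1) (hQt0 : ∀ y z, 0 < Qt y z)
    (hmin : IsMinOn (tiltedCrossEntropy Pxy Pc Qh Qt) Set.univ 0) :
    ∑ x, ∑ y, Pxy x y * ∑ z, Qh x y z * log (Qt y z) =
      ∑ x, ∑ y, Pxy x y * ∑ z, Pc x y z * log (Qt y z) := by
  have hderiv : HasDerivAt (tiltedCrossEntropy Pxy Pc Qh Qt)
      (∑ x, ∑ y, Pxy x y *
        (∑ z, Qh x y z * log (Qt y z) - ∑ z, Pc x y z * log (Qt y z))) 0 :=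
    HasDerivAt.fun_sum fun x _ => HasDerivAt.fun_sum fun y _ =>
      (hasDerivAt_sum_mul_log_one_div_tilt (hPc1 x y) (hQh0 x y) (hQh1 x y) (hQt0 y)).const_mul _
  have hzero := (hmin.isLocalMin Filter.univ_mem).hasDerivAt_eq_zero hderiv
  simp only [mul_sub, sum_sub_distrib] at hzero
  linarith

end Calibration

section MutualInformation

variable {X Y Z : Type*} [Fintype X] [Fintype Y] [Fintype Z]

lemma sum_sum_sum_mul_eq_sum_sum_sum_mul (g : X → Y → Z → ℝ) (f : Y → Z → ℝ) :
    ∑ x, ∑ y, ∑ z, g x y z * f y z = ∑ y, ∑ z, (∑ x, g x y z) * f y z := by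
  simp only [sum_mul]
  rw [sum_comm]
  exact sum_congr rfl fun y _ => sum_comm

/-- The summand of `I(Ẑ; X | Y)` at a point with `D = p q`, `D_{XY} = p`, `D_Y = a`,
`D_{YZ} = b`. -/
lemma mul_log_div_div_mul_div_eq {p q a b : ℝ} (hp : 0 ≤ p) (hq : 0 < q) (ha : p ≤ a)
    (hb : p * q ≤ b) :
    p * q * log ((p * q / a) / ((b / a) * (p / a))) =
      p * q * log q + p * q * (log a - log b) := by
  rcases hp.eq_or_lt with rfl | hp
  · simp
  have ha : 0 < a := hp.trans_le ha
  have hb : 0 < b := (mul_pos hp hq).trans_le hb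
  have hratio : (p * q / a) / ((b / a) * (p / a)) = q * (a / b) := by field_simp
  rw [hratio, log_mul hq.ne' (div_pos ha hb).ne', log_div ha.ne' hb.ne']
  ring

theorem sum_mul_log_condMutualInfo_eq {Pxy : X → Y → ℝ} {Qh : X → Y → Z → ℝ}
    (hPxy0 : ∀ x y, 0 ≤ Pxy x y) (hQh0 : ∀ x y z, 0 < Qh x y z)
    (hQh1 : ∀ x y, ∑ z, Qh x y z = 1)
    {D : X → Y → Z → ℝ} (hD : ∀ x y z, D x y z = Pxy x y * Qh x y z)
    {DY : Y → ℝ} (hDY : ∀ y, DY y = ∑ x, ∑ z, D x y z)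
    {DXY : X → Y → ℝ} (hDXY : ∀ x y, DXY x y = ∑ z, D x y z)
    {DYZ : Y → Z → ℝ} (hDYZ : ∀ y z, DYZ y z = ∑ x, D x y z) :
    ∑ x, ∑ y, ∑ z, D x y z * log ((D x y z / DY y) / ((DYZ y z / DY y) * (DXY x y / DY y))) =
      ∑ x, ∑ y, Pxy x y * ∑ z, Qh x y z * log (Qh x y z) +
        ∑ y, ∑ z, DYZ y z * (log (DY y) - log (DYZ y z)) := by
  have hD0 : ∀ x y z, 0 ≤ D x y z := fun x y z =>
    hD x y z ▸ mul_nonneg (hPxy0 x y) (hQh0 x y z).le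
  have hDXY' : ∀ x y, DXY x y = Pxy x y := fun x y => by
    simp only [hDXY, hD, ← mul_sum, hQh1, mul_one]
  have hDY' : ∀ y, DY y = ∑ x, Pxy x y := fun y => by
    simp only [hDY, hD, ← mul_sum, hQh1, mul_one]
  have hsplit : ∀ x y z,
      D x y z * log ((D x y z / DY y) / ((DYZ y z / DY y) * (DXY x y / DY y))) =
        D x y z * log (Qh x y z) + D x y z * (log (DY y) - log (DYZ y z)) := fun x y z => by
    rw [hD, hDXY']
    refine mul_log_div_div_mul_div_eq (hPxy0 x y) (hQh0 x y z) ?_ ?_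
    · exact hDY' y ▸ single_le_sum (fun x' _ => hPxy0 x' y) (mem_univ x)
    · exact hD x y z ▸ hDYZ y z ▸ single_le_sum (fun x' _ => hD0 x' y z) (mem_univ x)
  simp only [hsplit, sum_add_distrib, sum_sum_sum_mul_eq_sum_sum_sum_mul (f := fun y z =>
    log (DY y) - log (DYZ y z)), ← hDYZ]
  simp only [hD, mul_sum, mul_assoc]

end MutualInformation

theorem stmt17_general {X Y Z : Type*} [Fintype X] [Fintype Y] [Fintype Z]
    (Pxy : X → Y → ℝ) (Pc : X → Y → Z → ℝ) (Qh : X → Y → Z → ℝ) (Qt : Y → Z → ℝ)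
    (hPxy0 : ∀ x y, 0 ≤ Pxy x y)
    (hPc1 : ∀ x y, ∑ z, Pc x y z = 1)
    (hQh0 : ∀ x y z, 0 < Qh x y z) (hQh1 : ∀ x y, ∑ z, Qh x y z = 1)
    (hQt0 : ∀ y z, 0 < Qt y z) (hQt1 : ∀ y, ∑ z, Qt y z = 1)
    (hcal : ∀ α : ℝ,
      (∑ x, ∑ y, Pxy x y * ∑ z, Pc x y z *
          Real.log (1 / (Qh x y z * Qt y z ^ (0 : ℝ) /
            (∑ z', Qh x y z' * Qt y z' ^ (0 : ℝ))))) ≤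
        ∑ x, ∑ y, Pxy x y * ∑ z, Pc x y z *
          Real.log (1 / (Qh x y z * Qt y z ^ α / (∑ z', Qh x y z' * Qt y z' ^ α))))
    (D : X → Y → Z → ℝ) (hD : ∀ x y z, D x y z = Pxy x y * Qh x y z)
    (DY : Y → ℝ) (hDY : ∀ y, DY y = ∑ x, ∑ z, D x y z)
    (DXY : X → Y → ℝ) (hDXY : ∀ x y, DXY x y = ∑ z, D x y z)
    (DYZ : Y → Z → ℝ) (hDYZ : ∀ y z, DYZ y z = ∑ x, D x y z) :
    (∑ x, ∑ y, ∑ z, D x y z *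
        Real.log ((D x y z / DY y) / ((DYZ y z / DY y) * (DXY x y / DY y)))) ≤
      (∑ x, ∑ y, Pxy x y * ∑ z, Pc x y z * Real.log (1 / Qt y z)) -
        (-∑ x, ∑ y, Pxy x y * ∑ z, Qh x y z * Real.log (Qh x y z)) := by
  have hDYZ0 : ∀ y z, 0 ≤ DYZ y z := fun y z => hDYZ y z ▸
    sum_nonneg fun x _ => hD x y z ▸ mul_nonneg (hPxy0 x y) (hQh0 x y z).le
  have hDY' : ∀ y, DY y = ∑ z, DYZ y z := fun y => by simp only [hDY, hDYZ]; exact sum_comm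
  have hGibbs : ∑ y, ∑ z, DYZ y z * (log (DY y) - log (DYZ y z)) ≤
      -∑ y, ∑ z, DYZ y z * log (Qt y z) := by
    rw [← sum_neg_distrib]
    exact sum_le_sum fun y _ =>
      hDY' y ▸ sum_mul_log_sum_sub_log_le (hDYZ0 y) (hQt0 y) (hQt1 y)
  have hmarginal : ∑ x, ∑ y, Pxy x y * ∑ z, Qh x y z * log (Qt y z) =
      ∑ y, ∑ z, DYZ y z * log (Qt y z) := by
    simp only [hDYZ, ← sum_sum_sum_mul_eq_sum_sum_sum_mul, hD, mul_sum, mul_assoc]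
  have hcalibrated := sum_mul_sum_mul_log_eq_of_isMinOn_tiltedCrossEntropy hPc1 hQh0 hQh1 hQt0
    (isMinOn_univ_iff.2 hcal)
  have hCE : ∑ x, ∑ y, Pxy x y * ∑ z, Pc x y z * log (1 / Qt y z) =
      -∑ x, ∑ y, Pxy x y * ∑ z, Pc x y z * log (Qt y z) := by
    simp only [one_div, log_inv, mul_neg, sum_neg_distrib]
  rw [sum_mul_log_condMutualInfo_eq hPxy0 hQh0 hQh1 hD hDY hDXY hDYZ, hCE, ← hcalibrated,
    hmarginal]
  linarith

/-- Memory upper bound (Theorem 5.1): if `Q̂` is calibrated to the limited-context model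
`Q̃`, then `I(Ẑ; X | Y) ≤ CE(P‖Q̃) - H(Ẑ | X, Y)`, where `(X, Y, Ẑ)` has joint law
`D(x,y,z) = Pxy(x,y) Q̂(z|x,y)`. -/
theorem stmt17 {X Y Z : Type*} [Fintype X] [Fintype Y] [Fintype Z]
    (Pxy : X → Y → ℝ) (Pc : X → Y → Z → ℝ) (Qh : X → Y → Z → ℝ) (Qt : Y → Z → ℝ)
    (hPxy0 : ∀ x y, 0 ≤ Pxy x y) (hPxy1 : ∑ x, ∑ y, Pxy x y = 1)
    (hPc0 : ∀ x y z, 0 ≤ Pc x y z) (hPc1 : ∀ x y, ∑ z, Pc x y z = 1)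
    (hQh0 : ∀ x y z, 0 < Qh x y z) (hQh1 : ∀ x y, ∑ z, Qh x y z = 1)
    (hQt0 : ∀ y z, 0 < Qt y z) (hQt1 : ∀ y, ∑ z, Qt y z = 1)
    (hcal : ∀ α : ℝ,
      (∑ x, ∑ y, Pxy x y * ∑ z, Pc x y z *
          Real.log (1 / (Qh x y z * Qt y z ^ (0 : ℝ) /
            (∑ z', Qh x y z' * Qt y z' ^ (0 : ℝ))))) ≤
        ∑ x, ∑ y, Pxy x y * ∑ z, Pc x y z *
          Real.log (1 / (Qh x y z * Qt y z ^ α / (∑ z', Qh x y z' * Qt y z' ^ α))))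
    (D : X → Y → Z → ℝ) (hD : ∀ x y z, D x y z = Pxy x y * Qh x y z)
    (DY : Y → ℝ) (hDY : ∀ y, DY y = ∑ x, ∑ z, D x y z)
    (DXY : X → Y → ℝ) (hDXY : ∀ x y, DXY x y = ∑ z, D x y z)
    (DYZ : Y → Z → ℝ) (hDYZ : ∀ y z, DYZ y z = ∑ x, D x y z) :
    (∑ x, ∑ y, ∑ z, D x y z *
        Real.log ((D x y z / DY y) / ((DYZ y z / DY y) * (DXY x y / DY y)))) ≤
      (∑ x, ∑ y, Pxy x y * ∑ z, Pc x y z * Real.log (1 / Qt y z)) -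
        (-∑ x, ∑ y, Pxy x y * ∑ z, Qh x y z * Real.log (Qh x y z)) :=
  stmt17_general Pxy Pc Qh Qt hPxy0 hPc1 hQh0 hQh1 hQt0 hQt1 hcal D hD DY hDY DXY hDXY DYZ hDYZ
end
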